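/- arXiv:2106.14875 — 2 statements merged into one kernel-verified Lean document; each statement's English description precedes it below -/
import Mathlib

section
/- Fix an integer N ≥ 1 and the N+1 equidistant points x_i = −1 + 2i/N for i = 0, 1, …, N. Then the Gram polynomials (for parameter N) are orthonormal with respect to the discrete scalar product over these points: for all k, l with 0 ≤ k, l ≤ N, Σ_{i=0}^{N} G_k(x_i) G_l(x_i) equals 1 if k = l and equals 0 if k ≠ l. -/
/-- `gramAlpha N (m+1)` is the coefficient `α_{m,N}` from the Gram polynomial
recurrence (and `gramAlpha N 0 = α_{-1,N} = 1`):
`α_{m,N} = (N/(m+1)) · √((4(m+1)² − 1)/((N+1)² − (m+1)²))`. -/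
noncomputable def gramAlpha (N : ℕ) : ℕ → ℝ
  | 0 => 1
  | m + 1 =>
      ((N : ℝ) / (m + 1)) *
        Real.sqrt ((4 * ((m : ℝ) + 1) ^ 2 - 1) / (((N : ℝ) + 1) ^ 2 - ((m : ℝ) + 1) ^ 2))

/-- The Gram polynomials for parameter `N`: `G_0(x) = (N+1)^{-1/2}`, and
`G_{m+1}(x) = α_{m,N} x G_m(x) − γ_{m,N} G_{m-1}(x)` with `γ_{m,N} = α_{m,N}/α_{m-1,N}`
and `G_{-1} = 0`. -/
noncomputable def gramPoly (N : ℕ) : ℕ → Polynomial ℝ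
  | 0 => Polynomial.C (1 / Real.sqrt ((N : ℝ) + 1))
  | 1 => Polynomial.C (gramAlpha N 1) * Polynomial.X *
           Polynomial.C (1 / Real.sqrt ((N : ℝ) + 1))
  | m + 2 =>
      Polynomial.C (gramAlpha N (m + 2)) * Polynomial.X * gramPoly N (m + 1) -
        Polynomial.C (gramAlpha N (m + 2) / gramAlpha N (m + 1)) * gramPoly N m

/-!
Write `G_n = c_n p_n` with `p_n` monic; then `p_{n+1} = x p_n - b_n p_{n-1}` with
`b_n = n²((N+1)² - n²) / (N²(4n² - 1))`, and `b_{m+1} α_{m,N}² = 1`. With `h = 2/N`, the `p_n` are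
eigenvectors, for the distinct eigenvalues `-n(n+1)`, of the difference operator
`L p(x) = B(x)(p(x+h) - p(x)) + D(x)(p(x-h) - p(x))` of the discrete Chebyshev polynomials. Since
`D(x+h) = B(x)` and the weights vanish where a shift leaves the grid, summation by parts makes `L`
symmetric for the discrete scalar product, so the `p_n` are orthogonal. The eigenvalue equation is
proved by induction on the recurrence, together with a ladder relation for the commutator
`A p = L(x p) - x L p`. Orthogonality and the recurrence then give
`‖p_{n+1}‖² = ⟨x p_n, p_{n+1}⟩ = ⟨p_n, x p_{n+1}⟩ = b_{n+1} ‖p_n‖²`, so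
`‖G_n‖² = c_n² (N+1) ∏ b_j = 1`.
-/

namespace Gram

open Polynomial Finset

noncomputable def step (N : ℕ) : ℝ := 2 / N

noncomputable def node (N s : ℕ) : ℝ := -1 + 2 * s / N

-- At the node `x_s` the weights are `(s + 1)(N - s)` and `s(N + 1 - s)`.
noncomputable def upWeight (N : ℕ) : ℝ[X] :=
  C ((step N)⁻¹ ^ 2) * ((X + C (1 + step N)) * (1 - X))

noncomputable def downWeight (N : ℕ) : ℝ[X] :=
  C ((step N)⁻¹ ^ 2) * ((1 + X) * (C (1 + step N) - X))

noncomputable def diffOp (N : ℕ) (p : ℝ[X]) : ℝ[X] :=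
  upWeight N * (taylor (step N) p - p) + downWeight N * (taylor (-step N) p - p)

noncomputable def ladderOp (N : ℕ) (p : ℝ[X]) : ℝ[X] :=
  C (step N) * (upWeight N * taylor (step N) p - downWeight N * taylor (-step N) p)

noncomputable def dot (N : ℕ) (p q : ℝ[X]) : ℝ :=
  ∑ s ∈ range (N + 1), p.eval (node N s) * q.eval (node N s)

variable {N : ℕ}

lemma node_zero : node N 0 = -1 := by simp [node]

lemma node_self (hN : N ≠ 0) : node N N = 1 := by
  rw [node, mul_div_assoc, div_self (Nat.cast_ne_zero.2 hN)]; norm_num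

lemma node_succ (s : ℕ) : node N (s + 1) = node N s + step N := by
  simp only [node, step]; push_cast; ring

lemma upWeight_eval_one : (upWeight N).eval 1 = 0 := by simp [upWeight]

lemma downWeight_eval_neg_one : (downWeight N).eval (-1) = 0 := by simp [downWeight]

lemma downWeight_eval_add_step (y : ℝ) :
    (downWeight N).eval (y + step N) = (upWeight N).eval y := by
  simp only [downWeight, upWeight, eval_mul, eval_add, eval_sub, eval_C, eval_X, eval_one]; ring

lemma step_ne_zero (hN : N ≠ 0) : step N ≠ 0 := by
  unfold step; positivity

lemma step_sq_mul_weights_add (hN : N ≠ 0) :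
    C (step N ^ 2) * (upWeight N + downWeight N) = C (2 + 2 * step N) - 2 * X ^ 2 := by
  have := step_ne_zero hN
  refine Polynomial.funext fun y => ?_
  simp only [upWeight, downWeight, eval_mul, eval_add, eval_sub, eval_C, eval_X, eval_one,
    eval_pow, eval_ofNat]
  field_simp
  ring

lemma step_mul_weights_sub (hN : N ≠ 0) :
    C (step N) * (upWeight N - downWeight N) = -2 * X := by
  have := step_ne_zero hN
  refine Polynomial.funext fun y => ?_
  simp only [upWeight, downWeight, eval_mul, eval_add, eval_sub, eval_C, eval_X, eval_one,
    eval_neg, eval_ofNat]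
  field_simp
  ring

lemma diffOp_sub (p q : ℝ[X]) : diffOp N (p - q) = diffOp N p - diffOp N q := by
  simp only [diffOp, map_sub]; ring

lemma diffOp_C_mul (a : ℝ) (p : ℝ[X]) : diffOp N (C a * p) = C a * diffOp N p := by
  simp only [diffOp, taylor_mul, taylor_C]; ring

lemma diffOp_one : diffOp N 1 = 0 := by
  simp [diffOp]

lemma ladderOp_sub (p q : ℝ[X]) : ladderOp N (p - q) = ladderOp N p - ladderOp N q := by
  simp only [ladderOp, map_sub]; ring

lemma ladderOp_C_mul (a : ℝ) (p : ℝ[X]) : ladderOp N (C a * p) = C a * ladderOp N p := by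
  simp only [ladderOp, taylor_mul, taylor_C]; ring

lemma ladderOp_one (hN : N ≠ 0) : ladderOp N 1 = -2 * X := by
  rw [← step_mul_weights_sub hN]; simp [ladderOp]

lemma diffOp_X_mul (p : ℝ[X]) : diffOp N (X * p) = X * diffOp N p + ladderOp N p := by
  simp only [diffOp, ladderOp, taylor_mul, taylor_X, map_neg]; ring

lemma ladderOp_X_mul (hN : N ≠ 0) (p : ℝ[X]) :
    ladderOp N (X * p) =
      X * ladderOp N p + C (step N ^ 2) * diffOp N p + (C (2 + 2 * step N) - 2 * X ^ 2) * p := by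
  rw [← step_sq_mul_weights_add hN]
  simp only [diffOp, ladderOp, taylor_mul, taylor_X, map_neg, map_pow]; ring

lemma eval_diffOp (p : ℝ[X]) (y : ℝ) :
    (diffOp N p).eval y = (upWeight N).eval y * (p.eval (y + step N) - p.eval y) +
      (downWeight N).eval y * (p.eval (y - step N) - p.eval y) := by
  simp only [diffOp, eval_add, eval_mul, taylor_eval, sub_eq_add_neg, eval_neg]

lemma dot_comm (p q : ℝ[X]) : dot N p q = dot N q p :=
  sum_congr rfl fun _ _ => mul_comm _ _

lemma dot_add_left (p q r : ℝ[X]) : dot N (p + q) r = dot N p r + dot N q r := by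
  simp only [dot, eval_add, add_mul, sum_add_distrib]

lemma dot_sub_left (p q r : ℝ[X]) : dot N (p - q) r = dot N p r - dot N q r := by
  simp only [dot, eval_sub, sub_mul, sum_sub_distrib]

lemma dot_C_mul_left (a : ℝ) (p q : ℝ[X]) : dot N (C a * p) q = a * dot N p q := by
  simp only [dot, eval_mul, eval_C, mul_sum, mul_assoc]

lemma dot_C_mul_right (a : ℝ) (p q : ℝ[X]) : dot N p (C a * q) = a * dot N p q := by
  rw [dot_comm, dot_C_mul_left, dot_comm]

lemma dot_X_mul_left (p q : ℝ[X]) : dot N (X * p) q = dot N p (X * q) :=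
  sum_congr rfl fun _ _ => by simp only [eval_mul, eval_X]; ring

lemma dot_one_one : dot N 1 1 = N + 1 := by
  simp [dot]

/-- Summation by parts on the nodes: the weights vanish where the shifted node leaves the grid. -/
lemma sum_downWeight_mul_eq_sum_upWeight_mul (hN : N ≠ 0) (f g : ℝ → ℝ) :
    ∑ s ∈ range (N + 1), (downWeight N).eval (node N s) * f (node N s - step N) * g (node N s) =
      ∑ s ∈ range (N + 1),
        (upWeight N).eval (node N s) * f (node N s) * g (node N s + step N) := by
  rw [sum_range_succ', sum_range_succ, node_zero, node_self hN, downWeight_eval_neg_one,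
    upWeight_eval_one]
  simp only [zero_mul, add_zero, node_succ, downWeight_eval_add_step, add_sub_cancel_right]

lemma dot_diffOp_left (hN : N ≠ 0) (p q : ℝ[X]) :
    dot N (diffOp N p) q = ∑ s ∈ range (N + 1),
      ((upWeight N).eval (node N s) *
          (p.eval (node N s + step N) * q.eval (node N s) +
            p.eval (node N s) * q.eval (node N s + step N)) -
        ((upWeight N).eval (node N s) + (downWeight N).eval (node N s)) *
          (p.eval (node N s) * q.eval (node N s))) := by
  have hparts := sum_downWeight_mul_eq_sum_upWeight_mul hN (eval · p) (eval · q)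
  calc dot N (diffOp N p) q
      = ∑ s ∈ range (N + 1),
          ((upWeight N).eval (node N s) * p.eval (node N s + step N) * q.eval (node N s) -
            ((upWeight N).eval (node N s) + (downWeight N).eval (node N s)) *
              (p.eval (node N s) * q.eval (node N s))) +
        ∑ s ∈ range (N + 1),
          (downWeight N).eval (node N s) * p.eval (node N s - step N) * q.eval (node N s) := by
        rw [dot, ← sum_add_distrib]
        exact sum_congr rfl fun _ _ => by rw [eval_diffOp]; ring
    _ = _ := by
        rw [hparts, ← sum_add_distrib]
        exact sum_congr rfl fun _ _ => by ring

lemma dot_diffOp_comm (hN : N ≠ 0) (p q : ℝ[X]) :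
    dot N (diffOp N p) q = dot N p (diffOp N q) := by
  rw [dot_comm p, dot_diffOp_left hN, dot_diffOp_left hN]
  exact sum_congr rfl fun _ _ => by ring

lemma dot_eq_zero_of_diffOp_eq (hN : N ≠ 0) {p q : ℝ[X]} {a b : ℝ} (hp : diffOp N p = C a * p)
    (hq : diffOp N q = C b * q) (hab : a ≠ b) : dot N p q = 0 := by
  have h := dot_diffOp_comm hN p q
  rw [hp, hq, dot_C_mul_left, dot_C_mul_right] at h
  exact (mul_eq_zero.1 (by linear_combination h : (a - b) * dot N p q = 0)).resolve_left
    (sub_ne_zero.2 hab)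

noncomputable def monicCoeff (N n : ℕ) : ℝ :=
  (n : ℝ) ^ 2 * (((N : ℝ) + 1) ^ 2 - (n : ℝ) ^ 2) / ((N : ℝ) ^ 2 * (4 * (n : ℝ) ^ 2 - 1))

noncomputable def monicPoly (N : ℕ) : ℕ → ℝ[X]
  | 0 => 1
  | 1 => X
  | n + 2 => X * monicPoly N (n + 1) - C (monicCoeff N (n + 1)) * monicPoly N n

lemma monicCoeff_zero : monicCoeff N 0 = 0 := by simp [monicCoeff]

/-- `n - 1` truncates at `n = 0`, where the coefficient `monicCoeff N 0` vanishes. -/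
lemma monicPoly_succ (n : ℕ) :
    monicPoly N (n + 1) = X * monicPoly N n - C (monicCoeff N n) * monicPoly N (n - 1) := by
  cases n with
  | zero => simp [monicPoly, monicCoeff_zero]
  | succ n => rfl

lemma X_mul_monicPoly (n : ℕ) :
    X * monicPoly N n = monicPoly N (n + 1) + C (monicCoeff N n) * monicPoly N (n - 1) := by
  rw [monicPoly_succ]; ring

lemma monicCoeff_succ_relation (hN : N ≠ 0) (n : ℕ) :
    (4 * n + 6) * monicCoeff N (n + 1) - (4 * n - 2) * monicCoeff N n =
      2 + 2 * step N - step N ^ 2 * (n * (n + 1)) := by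
  have hN' : (N : ℝ) ≠ 0 := Nat.cast_ne_zero.2 hN
  have hn : (0 : ℝ) ≤ n := n.cast_nonneg
  have h0 : 4 * (n : ℝ) ^ 2 - 1 ≠ 0 := by
    intro h
    have : (2 * (n : ℝ) - 1) * (2 * n + 1) = 0 := by linear_combination h
    rcases mul_eq_zero.1 this with h' | h'
    · have : 2 * n = 1 := by exact_mod_cast (sub_eq_zero.1 h')
      omega
    · linarith
  have h1 : 4 * ((n : ℝ) + 1) ^ 2 - 1 ≠ 0 := by nlinarith
  simp only [monicCoeff, step]
  push_cast
  field_simp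
  ring

def EigenLadder (N n : ℕ) : Prop :=
  diffOp N (monicPoly N n) = C (-(n * (n + 1) : ℝ)) * monicPoly N n ∧
    ladderOp N (monicPoly N n) =
      C (-(2 * n + 2) : ℝ) * (X * monicPoly N n) +
        C ((4 * n + 2) * monicCoeff N n) * monicPoly N (n - 1)

lemma eigenLadder_zero (hN : N ≠ 0) : EigenLadder N 0 := by
  refine ⟨by simp [monicPoly, diffOp_one], ?_⟩
  simp [monicPoly, ladderOp_one hN, monicCoeff_zero, map_ofNat]

lemma eigenLadder_one (hN : N ≠ 0) : EigenLadder N 1 := by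
  have hX : monicPoly N 1 = X * 1 := (mul_one X).symm
  have hs := monicCoeff_succ_relation hN 0
  rw [monicCoeff_zero] at hs
  refine ⟨?_, ?_⟩
  · rw [hX, diffOp_X_mul, diffOp_one, ladderOp_one hN]
    refine Polynomial.funext fun y => ?_
    simp only [eval_add, eval_mul, eval_C, eval_X, eval_neg, eval_ofNat, eval_zero, eval_one]
    push_cast
    ring
  · rw [hX, ladderOp_X_mul hN, diffOp_one, ladderOp_one hN]
    refine Polynomial.funext fun y => ?_
    simp only [eval_add, eval_sub, eval_mul, eval_C, eval_X, eval_pow, eval_ofNat, eval_one,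
      eval_zero, eval_neg, Nat.sub_self, monicPoly]
    push_cast at hs ⊢
    linear_combination -hs

lemma eigenLadder_add_two (hN : N ≠ 0) {n : ℕ} (h₀ : EigenLadder N n)
    (h₁ : EigenLadder N (n + 1)) : EigenLadder N (n + 2) := by
  obtain ⟨hL₀, hA₀⟩ := h₀
  obtain ⟨hL₁, hA₁⟩ := h₁
  simp only [Nat.add_sub_cancel] at hA₁
  have hrec : monicPoly N (n + 2) =
      X * monicPoly N (n + 1) - C (monicCoeff N (n + 1)) * monicPoly N n := rfl
  refine ⟨?_, ?_⟩
  · rw [hrec, diffOp_sub, diffOp_C_mul, diffOp_X_mul, hL₁, hA₁, hL₀]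
    refine Polynomial.funext fun y => ?_
    simp only [eval_add, eval_sub, eval_mul, eval_C, eval_X]
    push_cast
    ring
  · rw [hrec, ladderOp_sub, ladderOp_C_mul, ladderOp_X_mul hN, hA₁, hL₁, hA₀]
    refine Polynomial.funext fun y => ?_
    have hXy := congrArg (eval y) (X_mul_monicPoly (N := N) n)
    have hs := monicCoeff_succ_relation hN (n + 1)
    simp only [eval_add, eval_sub, eval_mul, eval_C, eval_X, eval_pow, eval_ofNat] at hXy ⊢
    push_cast at hs ⊢
    linear_combination (4 * ((n : ℝ) + 1) - 2) * monicCoeff N (n + 1) * hXy -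
      (monicPoly N (n + 1)).eval y * hs

lemma eigenLadder (hN : N ≠ 0) (n : ℕ) : EigenLadder N n := by
  induction n using Nat.twoStepInduction with
  | zero => exact eigenLadder_zero hN
  | one => exact eigenLadder_one hN
  | more n h₀ h₁ => exact eigenLadder_add_two hN h₀ h₁

lemma diffOp_monicPoly (hN : N ≠ 0) (n : ℕ) :
    diffOp N (monicPoly N n) = C (-(n * (n + 1) : ℝ)) * monicPoly N n :=
  (eigenLadder hN n).1

lemma dot_monicPoly_of_ne (hN : N ≠ 0) {k l : ℕ} (hkl : k ≠ l) :
    dot N (monicPoly N k) (monicPoly N l) = 0 := by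
  refine dot_eq_zero_of_diffOp_eq hN (diffOp_monicPoly hN k) (diffOp_monicPoly hN l)
    fun h => hkl ?_
  have hmono : StrictMono fun n : ℕ => n * (n + 1) :=
    strictMono_nat_of_lt_succ fun n => by nlinarith
  exact hmono.injective (by exact_mod_cast neg_inj.1 h)

lemma dot_monicPoly_succ_self (hN : N ≠ 0) (n : ℕ) :
    dot N (monicPoly N (n + 1)) (monicPoly N (n + 1)) =
      monicCoeff N (n + 1) * dot N (monicPoly N n) (monicPoly N n) := by
  calc dot N (monicPoly N (n + 1)) (monicPoly N (n + 1))
      = dot N (X * monicPoly N n - C (monicCoeff N n) * monicPoly N (n - 1))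
          (monicPoly N (n + 1)) := by
        nth_rewrite 1 [monicPoly_succ]; rfl
    _ = dot N (monicPoly N n) (X * monicPoly N (n + 1)) := by
        rw [dot_sub_left, dot_C_mul_left, dot_monicPoly_of_ne hN (by omega), dot_X_mul_left,
          mul_zero, sub_zero]
    _ = monicCoeff N (n + 1) * dot N (monicPoly N n) (monicPoly N n) := by
        rw [X_mul_monicPoly, dot_comm, dot_add_left, dot_C_mul_left,
          dot_monicPoly_of_ne hN (by omega), zero_add, Nat.add_sub_cancel]

lemma dot_monicPoly_self (hN : N ≠ 0) (n : ℕ) :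
    dot N (monicPoly N n) (monicPoly N n) = (N + 1) * ∏ j ∈ range n, monicCoeff N (j + 1) := by
  induction n with
  | zero => simp [monicPoly, dot_one_one]
  | succ n ih => rw [dot_monicPoly_succ_self hN, ih, prod_range_succ]; ring

lemma monicCoeff_mul_gramAlpha_sq {k : ℕ} (hk : k + 1 ≤ N) :
    monicCoeff N (k + 1) * gramAlpha N (k + 1) ^ 2 = 1 := by
  have hk' : (k : ℝ) + 1 ≤ N := by exact_mod_cast hk
  have hden : (0 : ℝ) < ((N : ℝ) + 1) ^ 2 - ((k : ℝ) + 1) ^ 2 := by nlinarith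
  have hnum : (0 : ℝ) < 4 * ((k : ℝ) + 1) ^ 2 - 1 := by nlinarith
  have hN : (N : ℝ) ≠ 0 := Nat.cast_ne_zero.2 (by omega)
  rw [gramAlpha, mul_pow, Real.sq_sqrt (div_nonneg hnum.le hden.le), monicCoeff]
  push_cast
  field_simp
  exact div_self (by linarith)

noncomputable def leadCoeff (N n : ℕ) : ℝ :=
  (∏ j ∈ range n, gramAlpha N (j + 1)) / Real.sqrt ((N : ℝ) + 1)

lemma gramPoly_eq_C_mul_monicPoly {n : ℕ} (hn : n ≤ N) :
    gramPoly N n = C (leadCoeff N n) * monicPoly N n := by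
  induction n using Nat.twoStepInduction with
  | zero => simp [gramPoly, monicPoly, leadCoeff]
  | one =>
      simp only [gramPoly, monicPoly, leadCoeff, prod_range_one, div_eq_mul_inv, one_mul, C_mul]
      ring
  | more m ih₀ ih₁ =>
      have hb := monicCoeff_mul_gramAlpha_sq (N := N) (k := m) (by omega)
      have hα : gramAlpha N (m + 1) ≠ 0 := by rintro h; simp [h] at hb
      rw [gramPoly, ih₀ (by omega), ih₁ (by omega)]
      refine Polynomial.funext fun y => ?_
      simp only [monicPoly, leadCoeff, prod_range_succ, eval_sub, eval_mul, eval_C, eval_X]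
      field_simp
      linear_combination gramAlpha N (m + 2) * (∏ j ∈ range m, gramAlpha N (j + 1)) *
        (monicPoly N m).eval y * hb

lemma leadCoeff_sq_mul_prod_monicCoeff {n : ℕ} (hn : n ≤ N) :
    leadCoeff N n ^ 2 * ((N + 1) * ∏ j ∈ range n, monicCoeff N (j + 1)) = 1 := by
  have hsq : Real.sqrt ((N : ℝ) + 1) ^ 2 = N + 1 := Real.sq_sqrt (by positivity)
  calc leadCoeff N n ^ 2 * ((N + 1) * ∏ j ∈ range n, monicCoeff N (j + 1))
      = ∏ j ∈ range n, monicCoeff N (j + 1) * gramAlpha N (j + 1) ^ 2 := by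
        rw [leadCoeff, div_pow, hsq, prod_mul_distrib, prod_pow]
        field_simp
    _ = 1 := prod_eq_one fun j hj => monicCoeff_mul_gramAlpha_sq (by simp at hj; omega)

lemma dot_gramPoly (hN : N ≠ 0) {k l : ℕ} (hk : k ≤ N) (hl : l ≤ N) :
    dot N (gramPoly N k) (gramPoly N l) = if k = l then 1 else 0 := by
  rw [gramPoly_eq_C_mul_monicPoly hk, gramPoly_eq_C_mul_monicPoly hl, dot_C_mul_left,
    dot_C_mul_right]
  split_ifs with hkl
  · subst hkl
    rw [dot_monicPoly_self hN]
    linear_combination leadCoeff_sq_mul_prod_monicCoeff hk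
  · rw [dot_monicPoly_of_ne hN hkl, mul_zero, mul_zero]

end Gram

/-- For `N ≥ 1`, the Gram polynomials `G_0, …, G_N` are orthonormal with respect to
the discrete scalar product over the `N+1` equidistant points `x_i = −1 + 2i/N`. -/
theorem stmt_8 (N : ℕ) (hN : 1 ≤ N) (x : Fin (N + 1) → ℝ)
    (hx : ∀ i : Fin (N + 1), x i = -1 + 2 * (i : ℝ) / N)
    (k l : Fin (N + 1)) :
    ∑ i, (gramPoly N k).eval (x i) * (gramPoly N l).eval (x i) =
      if k = l then 1 else 0 := by
  have hdot : ∑ i, (gramPoly N k).eval (x i) * (gramPoly N l).eval (x i) =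
      Gram.dot N (gramPoly N k) (gramPoly N l) := by
    rw [Gram.dot, ← Fin.sum_univ_eq_sum_range]
    simp only [hx, Gram.node]
  rw [hdot, Gram.dot_gramPoly (by omega) k.is_le l.is_le]
  simp only [Fin.val_inj]
end

section
/- Fix an integer N ≥ 1, let x_i = −1 + 2i/N for i = 0, …, N, and fix an integer M with 0 ≤ M ≤ N. Define the moments b_j = ∫_{−1}^{1} G_j(x) dx and the Gram quadrature weights w*_i = Σ_{j=0}^{M} b_j G_j(x_i). Then the sum of the Gram quadrature weights equals 2: Σ_{i=0}^{N} w*_i = 2. -/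
/-!
Exchanging the sums, the weights add up to `∑ j b_j ∑ i G_j(x_i)`, and the `j = 0` term is
`(2/√(N+1)) · (N+1)/√(N+1) = 2`. For `1 ≤ j ≤ N`, `G_j` is a nonzero multiple of the monic
polynomial `v_j` of the rescaled recurrence, and `v_j` satisfies the discrete Sturm–Liouville
equation `Δ⁺v_j − Δ⁻v_j = −j(j+1) v_j` for the weighted differences
`Δ⁺ = gramFwd N`, `Δ⁻ = gramBwd N`. Since `Δ⁻v(x_{i+1}) = Δ⁺v(x_i)` and the
weights of `Δ⁻` vanish at both ends of the grid, summing over the grid telescopes to `0`.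
-/

open Finset

/-- Equal to `1 / gramAlpha N m ^ 2` for `1 ≤ m ≤ N`: the coefficient of the recurrence after
rescaling the Gram polynomials to be monic. -/
noncomputable def gramMonicCoeff (N m : ℕ) : ℝ :=
  (m : ℝ) ^ 2 * (((N : ℝ) + 1) ^ 2 - (m : ℝ) ^ 2) / ((4 * (m : ℝ) ^ 2 - 1) * (N : ℝ) ^ 2)

lemma natCast_sq_mul_four_sub_one_ne_zero (k : ℕ) : (k : ℝ) ^ 2 * 4 - 1 ≠ 0 := by
  rcases k with _ | k
  · norm_num
  · push_cast; nlinarith [k.cast_nonneg (α := ℝ)]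

lemma gramMonicCoeff_succ {N : ℕ} (hN : N ≠ 0) (k : ℕ) :
    (2 * (k : ℝ) + 3) * (N : ℝ) ^ 2 * gramMonicCoeff N (k + 1)
      = (2 * (k : ℝ) - 1) * (N : ℝ) ^ 2 * gramMonicCoeff N k - 2 * (k : ℝ) * ((k : ℝ) + 1)
        + (N : ℝ) ^ 2 + 2 * (N : ℝ) := by
  have hN' : (N : ℝ) ≠ 0 := by exact_mod_cast hN
  have h₁ := natCast_sq_mul_four_sub_one_ne_zero k
  have h₂ := natCast_sq_mul_four_sub_one_ne_zero (k + 1)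
  simp only [gramMonicCoeff] at *
  push_cast at *
  field_simp
  ring

noncomputable def gramMonic (N : ℕ) : ℕ → ℝ → ℝ
  | 0 => fun _ => 1
  | 1 => fun t => t
  | m + 2 => fun t => t * gramMonic N (m + 1) t - gramMonicCoeff N (m + 1) * gramMonic N m t

noncomputable def gramNorm (N m : ℕ) : ℝ :=
  (∏ j ∈ range m, gramAlpha N (j + 1)) / Real.sqrt ((N : ℝ) + 1)

lemma gramMonic_succ (N m : ℕ) (t : ℝ) :
    gramMonic N (m + 1) t = t * gramMonic N m t - gramMonicCoeff N m * gramMonic N (m - 1) t := by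
  cases m with
  | zero => simp [gramMonic, gramMonicCoeff]
  | succ m => rfl

lemma gramAlpha_sq_mul_gramMonicCoeff {N j : ℕ} (hj : j + 1 ≤ N) :
    gramAlpha N (j + 1) ^ 2 * gramMonicCoeff N (j + 1) = 1 := by
  have hN : (N : ℝ) ≠ 0 := by norm_cast; omega
  have hle : (j : ℝ) + 1 ≤ N := by exact_mod_cast hj
  have hnum : 0 < 4 * ((j : ℝ) + 1) ^ 2 - 1 := by nlinarith
  have hden : 0 < ((N : ℝ) + 1) ^ 2 - ((j : ℝ) + 1) ^ 2 := by nlinarith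
  have hnum' : ((j : ℝ) + 1) ^ 2 * 4 - 1 ≠ 0 := by linarith
  rw [gramAlpha, mul_pow, Real.sq_sqrt (by positivity), gramMonicCoeff]
  push_cast
  field_simp

lemma gramPoly_eval_eq_gramNorm_mul_gramMonic {N m : ℕ} (hm : m ≤ N) (t : ℝ) :
    (gramPoly N m).eval t = gramNorm N m * gramMonic N m t := by
  induction m using Nat.twoStepInduction with
  | zero => simp [gramPoly, gramNorm, gramMonic]
  | one =>
    simp only [gramPoly, Polynomial.eval_mul, Polynomial.eval_C, Polynomial.eval_X, gramNorm,
      range_one, prod_singleton, zero_add, gramMonic]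
    ring
  | more m ih₀ ih₁ =>
    have hα := gramAlpha_sq_mul_gramMonicCoeff (show m + 1 ≤ N by omega)
    have hα₀ : gramAlpha N (m + 1) ≠ 0 := by
      intro h
      simp [h] at hα
    have hnorm (k : ℕ) : gramNorm N (k + 1) = gramNorm N k * gramAlpha N (k + 1) := by
      simp only [gramNorm, prod_range_succ]; ring
    simp only [gramPoly, Polynomial.eval_sub, Polynomial.eval_mul, Polynomial.eval_C,
      Polynomial.eval_X]
    rw [ih₀ (by omega), ih₁ (by omega), hnorm (m + 1), hnorm m, gramMonic]
    linear_combination (norm := (field_simp; ring1))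
      (gramNorm N m * gramAlpha N (m + 2) * gramMonic N m t / gramAlpha N (m + 1)) * hα

/-- At the grid point `t = -1 + 2i/N` this is `(i + 1)(N - i)(v(x_{i+1}) - v(x_i))`. -/
noncomputable def gramFwd (N : ℕ) (v : ℝ → ℝ) (t : ℝ) : ℝ :=
  ((N : ℝ) * (t + 1) / 2 + 1) * ((N : ℝ) * (1 - t) / 2) * (v (t + 2 / N) - v t)

/-- At the grid point `t = -1 + 2i/N` this is `i(N + 1 - i)(v(x_i) - v(x_{i-1}))`. -/
noncomputable def gramBwd (N : ℕ) (v : ℝ → ℝ) (t : ℝ) : ℝ :=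
  ((N : ℝ) * (t + 1) / 2) * ((N : ℝ) * (1 - t) / 2 + 1) * (v t - v (t - 2 / N))

lemma gramBwd_add_step {N : ℕ} (hN : N ≠ 0) (v : ℝ → ℝ) (t : ℝ) :
    gramBwd N v (t + 2 / N) = gramFwd N v t := by
  have hN' : (N : ℝ) ≠ 0 := by exact_mod_cast hN
  simp only [gramBwd, gramFwd, add_sub_cancel_right]
  field_simp
  ring

lemma sum_range_gramFwd_sub_gramBwd {N : ℕ} (hN : N ≠ 0) (v : ℝ → ℝ) :
    ∑ i ∈ range (N + 1), (gramFwd N v (-1 + 2 * i / N) - gramBwd N v (-1 + 2 * i / N)) = 0 := by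
  have hN' : (N : ℝ) ≠ 0 := by exact_mod_cast hN
  have hstep (i : ℕ) : (-1 + 2 * (i : ℝ) / N) + 2 / N = -1 + 2 * ((i + 1 : ℕ) : ℝ) / N := by
    push_cast; ring
  simp_rw [← gramBwd_add_step hN, hstep]
  rw [sum_range_sub (fun i : ℕ => gramBwd N v (-1 + 2 * i / N))]
  simp only [gramBwd]
  push_cast
  field_simp
  ring

/-- The discrete Sturm–Liouville equation, together with the companion identity for
`Δ⁺ + Δ⁻` that makes the two-step induction go through. -/
lemma gramMonic_fwd_sub_bwd_and_fwd_add_bwd {N : ℕ} (hN : N ≠ 0) (m : ℕ) (t : ℝ) :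
    gramFwd N (gramMonic N m) t - gramBwd N (gramMonic N m) t
        = -((m : ℝ) * (m + 1)) * gramMonic N m t ∧
      gramFwd N (gramMonic N m) t + gramBwd N (gramMonic N m) t
        = -((m : ℝ) * N) * gramMonic N (m + 1) t
          + N * (m + 1) * gramMonicCoeff N m * gramMonic N (m - 1) t := by
  have hN' : (N : ℝ) ≠ 0 := by exact_mod_cast hN
  induction m using Nat.twoStepInduction generalizing t with
  | zero => simp [gramFwd, gramBwd, gramMonic, gramMonicCoeff]
  | one =>
    have h₀ : gramMonic N 0 t = 1 := rfl
    simp only [gramFwd, gramBwd, gramMonic, gramMonicCoeff, h₀]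
    push_cast
    constructor <;> field_simp <;> ring
  | more m ih₀ ih₁ =>
    have hrec (k : ℕ) (x : ℝ) := gramMonic_succ N k x
    obtain ⟨hSL₀, hC₀⟩ := ih₀ t
    obtain ⟨hSL₁, hC₁⟩ := ih₁ t
    have hq := gramMonicCoeff_succ hN (m + 1)
    simp only [gramFwd, gramBwd, Nat.add_sub_cancel] at *
    rw [hrec (m + 1) t, Nat.add_sub_cancel] at hC₁
    rw [hrec (m + 2), hrec (m + 1), hrec (m + 1), hrec (m + 1), Nat.add_sub_cancel]
    push_cast at *
    constructor
    · linear_combination (norm := (field_simp; ring1))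
        t * hSL₁ + 2 / (N : ℝ) * hC₁ - gramMonicCoeff N (m + 1) * hSL₀
    · linear_combination (norm := (field_simp; ring1))
        t * hC₁ + 2 / (N : ℝ) * hSL₁ - gramMonicCoeff N (m + 1) * hC₀
          - ((m : ℝ) + 1) * N * gramMonicCoeff N (m + 1) * hrec m t
          - (gramMonic N (m + 1) t / N) * hq

lemma sum_range_gramMonic_grid {N m : ℕ} (hN : N ≠ 0) (hm : m ≠ 0) :
    ∑ i ∈ range (N + 1), gramMonic N m (-1 + 2 * i / N) = 0 := by
  have hSL (i : ℕ) := (gramMonic_fwd_sub_bwd_and_fwd_add_bwd hN m (-1 + 2 * i / N)).1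
  have htel := sum_range_gramFwd_sub_gramBwd hN (gramMonic N m)
  simp_rw [hSL, ← mul_sum] at htel
  have hm' : (m : ℝ) * (m + 1) ≠ 0 := by positivity
  simpa [hm'] using htel

lemma sum_gramPoly_grid {N j : ℕ} (hN : N ≠ 0) (hj : j ≠ 0) (hjN : j ≤ N) :
    ∑ i : Fin (N + 1), (gramPoly N j).eval (-1 + 2 * (i : ℝ) / N) = 0 := by
  simp_rw [gramPoly_eval_eq_gramNorm_mul_gramMonic hjN, ← mul_sum,
    Fin.sum_univ_eq_sum_range (fun i : ℕ => gramMonic N j (-1 + 2 * (i : ℝ) / N)),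
    sum_range_gramMonic_grid hN hj, mul_zero]

/-- For `N ≥ 1`, `M ≤ N`, equidistant points `x_i = −1 + 2i/N`, moments
`b_j = ∫_{−1}^{1} G_j`, and Gram quadrature weights `w*_i = ∑ j, b_j G_j(x_i)`,
the sum of the weights equals `2`. -/
theorem stmt_13 (N M : ℕ) (hN : 1 ≤ N) (hM : M ≤ N)
    (x : Fin (N + 1) → ℝ) (hx : ∀ i : Fin (N + 1), x i = -1 + 2 * (i : ℝ) / N)
    (b : Fin (M + 1) → ℝ) (hb : ∀ j, b j = ∫ t in (-1 : ℝ)..1, (gramPoly N j).eval t)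
    (w : Fin (N + 1) → ℝ) (hw : ∀ i, w i = ∑ j, b j * (gramPoly N j).eval (x i)) :
    ∑ i, w i = 2 := by
  have hcomm : ∑ i, w i = ∑ j, b j * ∑ i, (gramPoly N j).eval (x i) := by
    simp_rw [hw, mul_sum]
    exact sum_comm
  have hhigher (j : Fin (M + 1)) (hj : j ≠ 0) : b j * ∑ i, (gramPoly N j).eval (x i) = 0 := by
    have hjN : (j : ℕ) ≤ N := by omega
    simp_rw [hx, sum_gramPoly_grid (by omega) (Fin.val_ne_zero_iff.mpr hj) hjN, mul_zero]
  rw [hcomm, sum_eq_single 0 (fun j _ => hhigher j) (by simp), hb]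
  have hs : Real.sqrt ((N : ℝ) + 1) ^ 2 = N + 1 := Real.sq_sqrt (by positivity)
  simp only [Fin.coe_ofNat_eq_mod, Nat.zero_mod, gramPoly, one_div, Polynomial.eval_C,
    intervalIntegral.integral_const, sub_neg_eq_add, smul_eq_mul, sum_const, card_univ,
    Fintype.card_fin, nsmul_eq_mul, Nat.cast_add, Nat.cast_one]
  field_simp
  linarith
end
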